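/- Let (T,*,[[·,·,·]],b) be a quadratic left Bol algebra over ℝ and let Π: T → T be a pseudoderivation of T with companion χ ∈ T. Define φ(Π)(x,y) := b(Π(x),y) + b(x,Π(y)). Then φ(Π) is a symmetric bilinear form on T and φ(Π) is left invariant for the ternary operation, i.e. φ(Π)([[x,y,z]],u) = -φ(Π)(z,[[x,y,u]]) for all x,y,z,u ∈ T. -/

import Mathlib

/-! Symmetry of `b`, its cyclic invariance and the skewness of `[[·,·,·]]` give the invariance
`b([[x,y,z]], u) = -b(z, [[x,y,u]])`. Expanding `φ(Π)([[x,y,z]], u)` by the derivation rule of `Π`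
on the ternary operation, each of the four resulting terms is matched by this invariance against
a term of `-φ(Π)(z, [[x,y,u]])`. -/

/-- A left Bol algebra over ℝ: a real vector space with a bilinear operation `mul`
and a trilinear operation `tri` satisfying (T01), (T02), (T1), (T2) and (T3). -/
structure LeftBolAlgebra (T : Type*) [AddCommGroup T] [Module ℝ T] where
  mul : T →ₗ[ℝ] T →ₗ[ℝ] T
  tri : T →ₗ[ℝ] T →ₗ[ℝ] T →ₗ[ℝ] T
  mul_anticomm : ∀ x y : T, mul x y = - mul y x
  tri_skew : ∀ x y z : T, tri x y z = - tri y x z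
  tri_cyclic : ∀ x y z : T, tri x y z + tri y z x + tri z x y = 0
  tri_leibniz : ∀ u v x y z : T,
    tri u v (tri x y z) = tri (tri u v x) y z + tri x (tri u v y) z + tri x y (tri u v z)
  bol : ∀ u v x y : T, tri u v (mul x y) =
    mul (tri u v x) y + mul x (tri u v y) + tri x y (mul u v) - mul (mul x y) (mul u v)

namespace LeftBolAlgebra

variable {T : Type*} [AddCommGroup T] [Module ℝ T]

theorem tri_left_invariant (A : LeftBolAlgebra T) {b : LinearMap.BilinForm ℝ T}
    (hsymm : ∀ x y : T, b x y = b y x)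
    (hinv : ∀ x y z u : T, b (A.tri x y z) u = b (A.tri z u x) y) (x y z u : T) :
    b (A.tri x y z) u = - b z (A.tri x y u) := by
  rw [hinv, hsymm z, hinv x y u z, A.tri_skew z u x, map_neg, LinearMap.neg_apply]

end LeftBolAlgebra

namespace LinearMap.BilinForm

variable {R M : Type*} [CommRing R] [AddCommGroup M] [Module R M]

/-- The paper's `φ(D)`: it vanishes exactly when `D` is `b`-skew. -/
def skewDefect (b : LinearMap.BilinForm R M) (D : M →ₗ[R] M) : LinearMap.BilinForm R M :=
  b ∘ₗ D + b.compl₂ D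

@[simp]
theorem skewDefect_apply (b : LinearMap.BilinForm R M) (D : M →ₗ[R] M) (x y : M) :
    b.skewDefect D x y = b (D x) y + b x (D y) :=
  rfl

theorem skewDefect_comm {b : LinearMap.BilinForm R M} (hsymm : ∀ x y : M, b x y = b y x)
    (D : M →ₗ[R] M) (x y : M) : b.skewDefect D x y = b.skewDefect D y x := by
  rw [skewDefect_apply, skewDefect_apply, hsymm (D x), hsymm x, add_comm]

theorem skewDefect_tri_left_invariant {b : LinearMap.BilinForm R M}
    {tri : M →ₗ[R] M →ₗ[R] M →ₗ[R] M}
    (hb : ∀ x y z u : M, b (tri x y z) u = - b z (tri x y u)) {D : M →ₗ[R] M}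
    (hD : ∀ x y z : M, D (tri x y z) = tri (D x) y z + tri x (D y) z + tri x y (D z))
    (x y z u : M) :
    b.skewDefect D (tri x y z) u = - b.skewDefect D z (tri x y u) := by
  simp only [skewDefect_apply, hD, map_add, LinearMap.add_apply, hb]
  ring

end LinearMap.BilinForm

theorem phi_of_pseudoderivation_symmetric_left_invariant
    {T : Type*} [AddCommGroup T] [Module ℝ T] (A : LeftBolAlgebra T)
    (b : LinearMap.BilinForm ℝ T) (hsymm : ∀ x y : T, b x y = b y x)
    (hinv : ∀ x y z u : T, b (A.tri x y z) u = b (A.tri z u x) y)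
    (Pd : T →ₗ[ℝ] T)
    (hP2 : ∀ x y z : T, Pd (A.tri x y z) =
      A.tri (Pd x) y z + A.tri x (Pd y) z + A.tri x y (Pd z)) :
    ∃ φ : LinearMap.BilinForm ℝ T,
      (∀ x y : T, φ x y = b (Pd x) y + b x (Pd y)) ∧
      (∀ x y : T, φ x y = φ y x) ∧
      (∀ x y z u : T, φ (A.tri x y z) u = - φ z (A.tri x y u)) :=
  ⟨LinearMap.BilinForm.skewDefect b Pd, LinearMap.BilinForm.skewDefect_apply b Pd,
    LinearMap.BilinForm.skewDefect_comm hsymm Pd,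
    LinearMap.BilinForm.skewDefect_tri_left_invariant (A.tri_left_invariant hsymm hinv) hP2⟩
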